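/- For m ≥ 2 and any n ≥ 0, c_m(m^3·n) ≡ c_m(m·n) (mod m). -/

import Mathlib

noncomputable def cm (m n : ℕ) : ℕ :=
  Nat.card {f : ℕ →₀ ℕ // (∑ i ∈ f.support, f i * m ^ i = n) ∧
    ∀ i k, f i ≠ 0 → k ≤ i → f k ≠ 0}

/-!
Splitting off the parts equal to `1` gives the recurrence `c(n+1) = ∑_{k ≤ n/m} c(k)`: if there
are `n + 1 - m k` ones, the remaining parts, divided by `m`, form a gap-free partition of `k`.
Writing `S(N) = ∑_{k<N} c(k)`, this says `c(mN) = S(N)` for `N ≥ 1` and that `c` takes the value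
`S(N+1)` at each of the `m` points `mN+1, …, mN+m`. So every such block adds a multiple of `m`,
and `S(mN+1) ≡ c(0) = 1 (mod m)`. Hence `c(m²N) + c(mN) = S(mN) + c(mN) = S(mN+1) ≡ 1` for
`N ≥ 1`; comparing the instances `N = mn` and `N = n` gives the claim.
-/

open Finset

namespace GapFreePartition

section Shift

variable {M : Type*} [AddZeroClass M]

noncomputable def tail (f : ℕ →₀ M) : ℕ →₀ M :=
  f.comapDomain Nat.succ Nat.succ_injective.injOn

noncomputable def cons (a : M) (g : ℕ →₀ M) : ℕ →₀ M :=
  Finsupp.single 0 a + g.embDomain ⟨Nat.succ, Nat.succ_injective⟩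

@[simp] lemma tail_apply (f : ℕ →₀ M) (i : ℕ) : tail f i = f (i + 1) := rfl

@[simp] lemma cons_zero (a : M) (g : ℕ →₀ M) : cons a g 0 = a := by
  simp [cons, Finsupp.embDomain_of_notMem_range]

@[simp] lemma cons_succ (a : M) (g : ℕ →₀ M) (i : ℕ) : cons a g (i + 1) = g i := by
  simp only [cons, Finsupp.add_apply, Finsupp.single_eq_of_ne (Nat.succ_ne_zero i), zero_add]
  exact Finsupp.embDomain_apply_self _ g i

@[simp] lemma tail_cons (a : M) (g : ℕ →₀ M) : tail (cons a g) = g := by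
  ext i
  simp

lemma cons_tail (f : ℕ →₀ M) : cons (f 0) (tail f) = f := by
  ext (_ | i) <;> simp

end Shift

def weight (m : ℕ) (f : ℕ →₀ ℕ) : ℕ := f.sum fun i a => a * m ^ i

lemma weight_cons (m a : ℕ) (g : ℕ →₀ ℕ) : weight m (cons a g) = a + m * weight m g := by
  simp only [weight, cons]
  rw [Finsupp.sum_add_index' (fun _ => zero_mul _) (fun _ _ _ => add_mul _ _ _),
    Finsupp.sum_single_index (zero_mul _), Finsupp.sum_embDomain, Finsupp.mul_sum]
  simp [pow_succ, mul_comm, mul_left_comm]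

lemma weight_eq (m : ℕ) (f : ℕ →₀ ℕ) : weight m f = f 0 + m * weight m (tail f) := by
  conv_lhs => rw [← cons_tail f]
  exact weight_cons m _ _

def IsGapFree (f : ℕ →₀ ℕ) : Prop := ∀ i k, f i ≠ 0 → k ≤ i → f k ≠ 0

lemma IsGapFree.tail {f : ℕ →₀ ℕ} (hf : IsGapFree f) : IsGapFree (GapFreePartition.tail f) :=
  fun i k hi hk => hf (i + 1) (k + 1) hi (by omega)

lemma IsGapFree.cons {a : ℕ} {g : ℕ →₀ ℕ} (ha : a ≠ 0) (hg : IsGapFree g) :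
    IsGapFree (cons a g) := by
  rintro (_ | i) (_ | k) hi hk
  · simpa using ha
  · omega
  · simpa using ha
  · simpa using hg i k (by simpa using hi) (by omega)

lemma IsGapFree.eq_zero {f : ℕ →₀ ℕ} (hf : IsGapFree f) (h0 : f 0 = 0) : f = 0 := by
  ext i
  by_contra hi
  exact hf i 0 hi (Nat.zero_le i) h0

def parts (m n : ℕ) : Set (ℕ →₀ ℕ) := {f | weight m f = n ∧ IsGapFree f}

lemma cm_eq_card (m n : ℕ) : cm m n = Nat.card (parts m n) := rfl

lemma cm_zero (m : ℕ) : cm m 0 = 1 := by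
  rw [cm_eq_card]
  refine Nat.card_eq_one_iff_exists.2 ⟨⟨0, by simp [weight], fun _ _ h => absurd rfl h⟩, ?_⟩
  rintro ⟨f, hw, hf⟩
  have h0 : f 0 = 0 := by rw [weight_eq] at hw; omega
  exact Subtype.ext (hf.eq_zero h0)

variable {m : ℕ}

lemma apply_zero_ne_zero_of_mem_parts {n : ℕ} {f : ℕ →₀ ℕ} (hf : f ∈ parts m (n + 1)) :
    f 0 ≠ 0 :=
  fun h0 => by simpa [hf.2.eq_zero h0, weight] using hf.1

lemma weight_tail_le_div (hm : 0 < m) {n : ℕ} {f : ℕ →₀ ℕ} (hf : f ∈ parts m (n + 1)) :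
    weight m (tail f) ≤ n / m := by
  have hf0 := apply_zero_ne_zero_of_mem_parts hf
  have hw := weight_eq m f
  rw [hf.1] at hw
  rw [Nat.le_div_iff_mul_le hm, mul_comm]
  omega

lemma cons_mem_parts (hm : 0 < m) {n k : ℕ} (hk : k ≤ n / m) {g : ℕ →₀ ℕ}
    (hg : g ∈ parts m k) : cons (n + 1 - m * k) g ∈ parts m (n + 1) := by
  rw [Nat.le_div_iff_mul_le hm] at hk
  refine ⟨?_, hg.2.cons (by lia)⟩
  rw [weight_cons, hg.1]
  lia

noncomputable def partsSuccEquiv (hm : 0 < m) (n : ℕ) :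
    parts m (n + 1) ≃ Σ k : Fin (n / m + 1), parts m k where
  toFun f := ⟨⟨_, Nat.lt_succ_of_le (weight_tail_le_div hm f.2)⟩, tail f.1, rfl, f.2.2.tail⟩
  invFun x := ⟨_, cons_mem_parts hm (Nat.lt_succ_iff.1 x.1.2) x.2.2⟩
  left_inv f := Subtype.ext <| by
    change cons (n + 1 - m * weight m (tail f.1)) (tail f.1) = f.1
    conv_rhs => rw [← cons_tail f.1]
    have := weight_eq m f
    have := f.2.1
    congr 1
    omega
  right_inv x := Sigma.subtype_ext (Fin.ext (by simp [x.2.2.1])) (tail_cons _ _)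

lemma finite_parts (hm : 0 < m) (n : ℕ) : Finite (parts m n) := by
  induction n using Nat.strong_induction_on with
  | _ n ih =>
    cases n with
    | zero => exact Nat.finite_of_card_ne_zero (by rw [← cm_eq_card, cm_zero]; exact one_ne_zero)
    | succ n =>
      have (k : Fin (n / m + 1)) : Finite (parts m k) :=
        ih k (by have := Nat.div_le_self n m; omega)
      exact Finite.of_equiv _ (partsSuccEquiv hm n).symm

theorem cm_succ (hm : 0 < m) (n : ℕ) : cm m (n + 1) = ∑ k ∈ range (n / m + 1), cm m k := by
  have := finite_parts hm
  rw [cm_eq_card, Nat.card_congr (partsSuccEquiv hm n), Nat.card_sigma,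
    ← Fin.sum_univ_eq_sum_range]
  rfl

end GapFreePartition

open GapFreePartition

section Congruence

variable {m : ℕ}

lemma cm_mul_add_add_one (hm : 0 < m) (N : ℕ) {r : ℕ} (hr : r < m) :
    cm m (m * N + r + 1) = ∑ k ∈ range (N + 1), cm m k := by
  rw [cm_succ hm, Nat.mul_add_div hm, Nat.div_eq_of_lt hr, add_zero]

lemma cm_mul (hm : 0 < m) {N : ℕ} (hN : 0 < N) : cm m (m * N) = ∑ k ∈ range N, cm m k := by
  obtain ⟨N, rfl⟩ := Nat.exists_eq_add_one_of_ne_zero hN.ne'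
  rw [← cm_mul_add_add_one hm N (Nat.sub_one_lt hm.ne')]
  congr 1
  rw [mul_add]
  omega

lemma sum_range_mul_add_one_cm_modEq_one (hm : 0 < m) (N : ℕ) :
    ∑ k ∈ range (m * N + 1), cm m k ≡ 1 [MOD m] := by
  induction N with
  | zero => simp [cm_zero, Nat.ModEq]
  | succ N ih =>
    have hblock : ∀ r ∈ range m, cm m (m * N + 1 + r) = ∑ k ∈ range (N + 1), cm m k :=
      fun r hr => by rw [add_right_comm]; exact cm_mul_add_add_one hm N (mem_range.1 hr)
    rw [show m * (N + 1) + 1 = m * N + 1 + m by ring, sum_range_add, sum_congr rfl hblock,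
      sum_const, card_range, smul_eq_mul, Nat.ModEq, Nat.add_mul_mod_self_left]
    exact ih

lemma cm_mul_mul_add_cm_mul_modEq_one (hm : 0 < m) {N : ℕ} (hN : 0 < N) :
    cm m (m * (m * N)) + cm m (m * N) ≡ 1 [MOD m] := by
  rw [cm_mul hm (Nat.mul_pos hm hN), ← sum_range_succ]
  exact sum_range_mul_add_one_cm_modEq_one hm N

end Congruence

theorem cm_cube_congruence (m : ℕ) (hm : 2 ≤ m) (n : ℕ) :
    cm m (m ^ 3 * n) ≡ cm m (m * n) [MOD m] := by
  rcases Nat.eq_zero_or_pos n with rfl | hn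
  · simp [Nat.ModEq.refl]
  have hm₀ : 0 < m := by omega
  refine Nat.ModEq.add_right_cancel' (cm m (m * (m * n))) ?_
  calc cm m (m ^ 3 * n) + cm m (m * (m * n))
      = cm m (m * (m * (m * n))) + cm m (m * (m * n)) := by
        rw [show m ^ 3 * n = m * (m * (m * n)) by ring]
    _ ≡ 1 [MOD m] := cm_mul_mul_add_cm_mul_modEq_one hm₀ (Nat.mul_pos hm₀ hn)
    _ ≡ cm m (m * (m * n)) + cm m (m * n) [MOD m] := (cm_mul_mul_add_cm_mul_modEq_one hm₀ hn).symm
    _ = cm m (m * n) + cm m (m * (m * n)) := add_comm _ _
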